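/- For positive definite Hermitian matrices Φ₀ and Φ₁, the geodesic midpoint Φ_{1/2} := ((Φ₀^{1/2} + Φ₁^{1/2}U)/2)((Φ₀^{1/2} + Φ₁^{1/2}U)/2)* with U := Φ₁^{-1/2} Φ₀^{-1/2} (Φ₀^{1/2} Φ₁ Φ₀^{1/2})^{1/2} satisfies d(Φ₀, Φ_{1/2}) = d(Φ_{1/2}, Φ₁) = d(Φ₀,Φ₁)/2, where d(A,B)² := tr(A)+tr(B)-2·tr((B^{1/2}AB^{1/2})^{1/2}). -/

import Mathlib

/-!
Write `Φ₀ = A Aᴴ` and `Φ₁ = X Xᴴ` with `Aᴴ X` positive semidefinite; here `A = Φ₀^{1/2}` and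
`X = Φ₁^{1/2} U = A⁻¹ (A Φ₁ A)^{1/2}`, so that `Aᴴ X = (A Φ₁ A)^{1/2}`. The geodesic is then
`Φ_t = Z_t Z_tᴴ` with `Z_t = (1 - t) A + t X`. Every fidelity term `tr (Ψ^{1/2} Φ Ψ^{1/2})^{1/2}`
is the trace of the square root of a product `C D`, and `C D`, `D C` have the same characteristic
polynomial, hence the same eigenvalues. Choosing the factors so that `D C = K²` with `K` one of
`Aᴴ X`, `Aᴴ Z_t`, `Z_tᴴ X`, which are positive semidefinite and affine in `t`, all fidelities and
`tr Φ_t` become affine or quadratic in `t`, and `d(Φ₀, Φ_t) = t d(Φ₀, Φ₁)`,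
`d(Φ_t, Φ₁) = (1 - t) d(Φ₀, Φ₁)`.
-/

open Matrix
open scoped ComplexOrder

/-- `Matrix.PosSemidef.sqrt` was removed from Mathlib; restored here with its old definition. -/
noncomputable def Matrix.PosSemidef.sqrt {n 𝕜 : Type*} [Fintype n] [RCLike 𝕜] [DecidableEq n]
    {A : Matrix n n 𝕜} (hA : A.PosSemidef) : Matrix n n 𝕜 :=
  hA.1.eigenvectorUnitary.1 * diagonal ((↑) ∘ (hA.1.eigenvalues · |>.sqrt)) *
  (star hA.1.eigenvectorUnitary : Matrix n n 𝕜)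

namespace Matrix.PosSemidef

variable {n 𝕜 : Type*} [Fintype n] [DecidableEq n] [RCLike 𝕜] {A : Matrix n n 𝕜}

open scoped MatrixOrder

lemma sqrt_eq_cfcSqrt (hA : A.PosSemidef) : hA.sqrt = CFC.sqrt A := by
  rw [CFC.sqrt_eq_cfc, cfc_nnreal_eq_real _ A, hA.1.cfc_eq]
  simp only [IsHermitian.cfc, Matrix.PosSemidef.sqrt, Unitary.conjStarAlgAut_apply]
  congr 3
  funext i
  simp [Real.coe_sqrt, Real.coe_toNNReal', hA.eigenvalues_nonneg i]

lemma posSemidef_sqrt (hA : A.PosSemidef) : hA.sqrt.PosSemidef := by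
  rw [hA.sqrt_eq_cfcSqrt]
  exact (CFC.sqrt_nonneg A).posSemidef

lemma sqrt_mul_self (hA : A.PosSemidef) : hA.sqrt * hA.sqrt = A := by
  rw [hA.sqrt_eq_cfcSqrt]
  exact CFC.sqrt_mul_sqrt_self A hA.nonneg

lemma sqrt_eq_of_mul_self_eq {B : Matrix n n 𝕜} (hA : A.PosSemidef) (hB : B.PosSemidef)
    (h : B * B = A) : hA.sqrt = B := by
  rw [hA.sqrt_eq_cfcSqrt, CFC.sqrt_eq_iff A B hA.nonneg hB.nonneg, h]

lemma trace_sqrt (hA : A.PosSemidef) : hA.sqrt.trace = ∑ i, ((hA.1.eigenvalues i).sqrt : 𝕜) := by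
  rw [sqrt, trace_mul_cycle, Unitary.coe_star_mul_self, Matrix.one_mul, trace_diagonal]
  rfl

lemma trace_sqrt_mul_comm {C D X Y : Matrix n n 𝕜} (hX : X.PosSemidef) (hY : Y.PosSemidef)
    (hCD : C * D = X) (hDC : D * C = Y) : hX.sqrt.trace = hY.sqrt.trace := by
  have : hX.1.eigenvalues = hY.1.eigenvalues := by
    rw [IsHermitian.eigenvalues_eq_eigenvalues_iff, ← hCD, ← hDC, charpoly_mul_comm]
  rw [trace_sqrt, trace_sqrt, this]

lemma trace_sqrt_eq_of_mul_comm_eq_mul_self {C D K X : Matrix n n 𝕜} (hX : X.PosSemidef)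
    (hK : K.PosSemidef) (hCD : C * D = X) (hDC : D * C = K * K) : hX.sqrt.trace = K.trace := by
  have hKK : (K * K).PosSemidef := by
    simpa only [hK.1.eq] using posSemidef_self_mul_conjTranspose K
  rw [trace_sqrt_mul_comm hX hKK hCD hDC, sqrt_eq_of_mul_self_eq hKK hK rfl]

end Matrix.PosSemidef

namespace Matrix

variable {n 𝕜 : Type*} [Fintype n] [DecidableEq n] [RCLike 𝕜]

noncomputable def hellingerGeodesic (A X : Matrix n n 𝕜) (t : ℝ) : Matrix n n 𝕜 :=
  ((1 - t) • A + t • X) * ((1 - t) • A + t • X)ᴴ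

variable {Φ₀ Φ₁ A X : Matrix n n 𝕜} {t : ℝ}

lemma trace_hellingerGeodesic (hA : A * Aᴴ = Φ₀) (hX : X * Xᴴ = Φ₁) (hS : (Aᴴ * X).IsHermitian) :
    (hellingerGeodesic A X t).trace =
      (1 - t) ^ 2 • Φ₀.trace + (2 * t * (1 - t)) • (Aᴴ * X).trace + t ^ 2 • Φ₁.trace := by
  have hAX : (A * Xᴴ).trace = (Aᴴ * X).trace := by
    rw [trace_mul_comm, ← conjTranspose_conjTranspose A, ← conjTranspose_mul, hS.eq,
      conjTranspose_conjTranspose]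
  have hXA : (X * Aᴴ).trace = (Aᴴ * X).trace := trace_mul_comm _ _
  simp only [hellingerGeodesic, conjTranspose_add, conjTranspose_smul, star_trivial, add_mul,
    mul_add, smul_mul_smul_comm, trace_add, trace_smul, hA, hX, hAX, hXA]
  module

lemma PosSemidef.trace_sqrt_conj_eq_trace_conjTranspose_mul {B : Matrix n n 𝕜}
    (hY : (B * Φ₀ * B).PosSemidef) (hA : A * Aᴴ = Φ₀) (hX : X * Xᴴ = Φ₁)
    (hS : (Aᴴ * X).PosSemidef) (hB : B * B = Φ₁) : hY.sqrt.trace = (Aᴴ * X).trace := by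
  refine hY.trace_sqrt_eq_of_mul_comm_eq_mul_self (C := B * A) (D := Aᴴ * B) hS ?_ ?_
  · rw [← hA]; noncomm_ring
  · calc Aᴴ * B * (B * A) = Aᴴ * X * (Aᴴ * X)ᴴ := by
          simp only [conjTranspose_mul, conjTranspose_conjTranspose, Matrix.mul_assoc,
            ← Matrix.mul_assoc B, ← Matrix.mul_assoc X, hB, hX]
      _ = Aᴴ * X * (Aᴴ * X) := by rw [hS.1.eq]

lemma PosSemidef.trace_sqrt_conj_hellingerGeodesic_start {R : Matrix n n 𝕜}
    (hY : (R * Φ₀ * R).PosSemidef) (ht₀ : 0 ≤ t) (ht₁ : t ≤ 1) (hA : A * Aᴴ = Φ₀)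
    (hS : (Aᴴ * X).PosSemidef) (hR : R * R = hellingerGeodesic A X t) :
    hY.sqrt.trace = (1 - t) • Φ₀.trace + t • (Aᴴ * X).trace := by
  have hK : ((1 - t) • (Aᴴ * A) + t • (Aᴴ * X)).PosSemidef :=
    ((posSemidef_conjTranspose_mul_self A).smul (sub_nonneg.2 ht₁)).add (hS.smul ht₀)
  have hKZ : Aᴴ * ((1 - t) • A + t • X) = (1 - t) • (Aᴴ * A) + t • (Aᴴ * X) := by
    simp only [Matrix.mul_add, Matrix.mul_smul]
  rw [hY.trace_sqrt_eq_of_mul_comm_eq_mul_self (C := R * A) (D := Aᴴ * R) hK, trace_add,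
    trace_smul, trace_smul, trace_mul_comm, hA]
  · rw [← hA]; noncomm_ring
  · calc Aᴴ * R * (R * A) = Aᴴ * ((1 - t) • A + t • X) * (Aᴴ * ((1 - t) • A + t • X))ᴴ := by
          simp only [Matrix.mul_assoc, ← Matrix.mul_assoc R, hR, hellingerGeodesic,
            conjTranspose_mul, conjTranspose_conjTranspose]
      _ = _ := by rw [hKZ, hK.1.eq]

lemma PosSemidef.trace_sqrt_conj_hellingerGeodesic_end {B : Matrix n n 𝕜}
    (hY : (B * hellingerGeodesic A X t * B).PosSemidef) (ht₀ : 0 ≤ t) (ht₁ : t ≤ 1)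
    (hX : X * Xᴴ = Φ₁) (hS : (Aᴴ * X).PosSemidef) (hB : B * B = Φ₁) :
    hY.sqrt.trace = (1 - t) • (Aᴴ * X).trace + t • Φ₁.trace := by
  have hK : ((1 - t) • (Aᴴ * X) + t • (Xᴴ * X)).PosSemidef :=
    (hS.smul (sub_nonneg.2 ht₁)).add ((posSemidef_conjTranspose_mul_self X).smul ht₀)
  have hKZ : ((1 - t) • A + t • X)ᴴ * X = (1 - t) • (Aᴴ * X) + t • (Xᴴ * X) := by
    simp only [conjTranspose_add, conjTranspose_smul, star_trivial, Matrix.add_mul,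
      Matrix.smul_mul]
  rw [hY.trace_sqrt_eq_of_mul_comm_eq_mul_self (C := B * ((1 - t) • A + t • X))
    (D := ((1 - t) • A + t • X)ᴴ * B) hK, trace_add, trace_smul, trace_smul, trace_mul_comm Xᴴ, hX]
  · simp only [hellingerGeodesic, Matrix.mul_assoc]
  · calc ((1 - t) • A + t • X)ᴴ * B * (B * ((1 - t) • A + t • X))
          = ((1 - t) • A + t • X)ᴴ * X * (((1 - t) • A + t • X)ᴴ * X)ᴴ := by
          simp only [Matrix.mul_assoc, ← Matrix.mul_assoc B, hB, ← hX, conjTranspose_mul,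
            conjTranspose_conjTranspose]
      _ = _ := by rw [hKZ, hK.1.eq]

noncomputable def hellingerDist (Φ Ψ : Matrix n n 𝕜) (hΨ : Ψ.PosSemidef)
    (h : (hΨ.sqrt * Φ * hΨ.sqrt).PosSemidef) : ℝ :=
  √(RCLike.re Φ.trace + RCLike.re Ψ.trace - 2 * RCLike.re h.sqrt.trace)

theorem hellingerDist_hellingerGeodesic_start (ht₀ : 0 ≤ t) (ht₁ : t ≤ 1) (hA : A * Aᴴ = Φ₀)
    (hX : X * Xᴴ = Φ₁) (hS : (Aᴴ * X).PosSemidef) (h₁ : Φ₁.PosSemidef)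
    (hM : (hellingerGeodesic A X t).PosSemidef) (hY : (hM.sqrt * Φ₀ * hM.sqrt).PosSemidef)
    (hZ : (h₁.sqrt * Φ₀ * h₁.sqrt).PosSemidef) :
    hellingerDist Φ₀ (hellingerGeodesic A X t) hM hY = t * hellingerDist Φ₀ Φ₁ h₁ hZ := by
  rw [hellingerDist, hellingerDist, trace_hellingerGeodesic hA hX hS.1,
    hY.trace_sqrt_conj_hellingerGeodesic_start ht₀ ht₁ hA hS hM.sqrt_mul_self,
    hZ.trace_sqrt_conj_eq_trace_conjTranspose_mul hA hX hS h₁.sqrt_mul_self]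
  simp only [map_add, RCLike.smul_re]
  conv_rhs => rw [← Real.sqrt_sq ht₀, ← Real.sqrt_mul (sq_nonneg t)]
  congr 1
  ring

theorem hellingerDist_hellingerGeodesic_end (ht₀ : 0 ≤ t) (ht₁ : t ≤ 1) (hA : A * Aᴴ = Φ₀)
    (hX : X * Xᴴ = Φ₁) (hS : (Aᴴ * X).PosSemidef) (h₁ : Φ₁.PosSemidef)
    (hY : (h₁.sqrt * hellingerGeodesic A X t * h₁.sqrt).PosSemidef)
    (hZ : (h₁.sqrt * Φ₀ * h₁.sqrt).PosSemidef) :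
    hellingerDist (hellingerGeodesic A X t) Φ₁ h₁ hY = (1 - t) * hellingerDist Φ₀ Φ₁ h₁ hZ := by
  rw [hellingerDist, hellingerDist, trace_hellingerGeodesic hA hX hS.1,
    hY.trace_sqrt_conj_hellingerGeodesic_end ht₀ ht₁ hX hS h₁.sqrt_mul_self,
    hZ.trace_sqrt_conj_eq_trace_conjTranspose_mul hA hX hS h₁.sqrt_mul_self]
  simp only [map_add, RCLike.smul_re]
  conv_rhs => rw [← Real.sqrt_sq (sub_nonneg.2 ht₁), ← Real.sqrt_mul (sq_nonneg _)]
  congr 1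
  ring

lemma PosDef.isUnit_det_sqrt {Φ : Matrix n n 𝕜} (hΦ : Φ.PosDef) :
    IsUnit hΦ.posSemidef.sqrt.det := by
  have h : IsUnit Φ.det := isUnit_iff_ne_zero.2 hΦ.det_pos.ne'
  rw [← hΦ.posSemidef.sqrt_mul_self, det_mul] at h
  exact isUnit_of_mul_isUnit_left h

lemma inv_mul_mul_conjTranspose_inv_mul {Φ A S : Matrix n n 𝕜} (hA : IsUnit A.det)
    (hAH : A.IsHermitian) (hSH : S.IsHermitian) (hSS : S * S = A * Φ * A) :
    A⁻¹ * S * (A⁻¹ * S)ᴴ = Φ := by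
  rw [conjTranspose_mul, conjTranspose_nonsing_inv, hAH.eq, hSH.eq, Matrix.mul_assoc,
    ← Matrix.mul_assoc S, hSS]
  simp only [Matrix.mul_assoc]
  rw [mul_nonsing_inv _ hA, Matrix.mul_one, nonsing_inv_mul_cancel_left _ _ hA]

end Matrix

theorem hellinger_geodesic_midpoint (n : ℕ)
    (Φ₀ Φ₁ : Matrix (Fin n) (Fin n) ℂ)
    (h0 : Φ₀.PosDef) (h1 : Φ₁.PosDef)
    (hS0 : (h0.posSemidef.sqrt * Φ₁ * h0.posSemidef.sqrt).PosSemidef)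
    (U : Matrix (Fin n) (Fin n) ℂ)
    (hU : U = h1.posSemidef.sqrt⁻¹ * h0.posSemidef.sqrt⁻¹ * hS0.sqrt)
    (M : Matrix (Fin n) (Fin n) ℂ)
    (hMdef : M = (((1 : ℂ) / 2) • (h0.posSemidef.sqrt + h1.posSemidef.sqrt * U)) *
        (((1 : ℂ) / 2) • (h0.posSemidef.sqrt + h1.posSemidef.sqrt * U))ᴴ)
    (hM : M.PosDef)
    (hS1 : (hM.posSemidef.sqrt * Φ₀ * hM.posSemidef.sqrt).PosSemidef)
    (hS2 : (h1.posSemidef.sqrt * M * h1.posSemidef.sqrt).PosSemidef)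
    (hS3 : (h1.posSemidef.sqrt * Φ₀ * h1.posSemidef.sqrt).PosSemidef) :
    Real.sqrt (Φ₀.trace.re + M.trace.re - 2 * hS1.sqrt.trace.re) =
        Real.sqrt (Φ₀.trace.re + Φ₁.trace.re - 2 * hS3.sqrt.trace.re) / 2 ∧
      Real.sqrt (M.trace.re + Φ₁.trace.re - 2 * hS2.sqrt.trace.re) =
        Real.sqrt (Φ₀.trace.re + Φ₁.trace.re - 2 * hS3.sqrt.trace.re) / 2 := by
  set A := h0.posSemidef.sqrt
  set B := h1.posSemidef.sqrt
  set S := hS0.sqrt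
  have hAu : IsUnit A.det := h0.isUnit_det_sqrt
  have hBu : IsUnit B.det := h1.isUnit_det_sqrt
  have hAH : A.IsHermitian := h0.posSemidef.posSemidef_sqrt.1
  have hA : A * Aᴴ = Φ₀ := by rw [hAH.eq]; exact h0.posSemidef.sqrt_mul_self
  have hX : A⁻¹ * S * (A⁻¹ * S)ᴴ = Φ₁ :=
    inv_mul_mul_conjTranspose_inv_mul hAu hAH hS0.posSemidef_sqrt.1 hS0.sqrt_mul_self
  have hBU : B * U = A⁻¹ * S := by
    rw [hU, ← Matrix.mul_assoc, ← Matrix.mul_assoc, mul_nonsing_inv _ hBu, Matrix.one_mul]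
  have hMgeo : M = hellingerGeodesic A (A⁻¹ * S) (1 / 2) := by
    have : (1 / 2 : ℂ) • (A + A⁻¹ * S) = (1 - 1 / 2 : ℝ) • A + (1 / 2 : ℝ) • (A⁻¹ * S) := by
      rw [RCLike.real_smul_eq_coe_smul (K := ℂ), RCLike.real_smul_eq_coe_smul (K := ℂ), smul_add]
      norm_num
    rw [hMdef, hBU, hellingerGeodesic, this]
  subst hMgeo
  have hS : (Aᴴ * (A⁻¹ * S)).PosSemidef := by
    rw [hAH.eq, mul_nonsing_inv_cancel_left _ _ hAu]
    exact hS0.posSemidef_sqrt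
  have ht₀ : (0 : ℝ) ≤ 1 / 2 := by norm_num
  have ht₁ : (1 / 2 : ℝ) ≤ 1 := by norm_num
  -- both sides of each conjunct are `hellingerDist` terms up to definitional unfolding
  constructor
  · exact (hellingerDist_hellingerGeodesic_start ht₀ ht₁ hA hX hS h1.posSemidef hM.posSemidef
      hS1 hS3).trans (one_div_mul_eq_div _ _)
  · exact (hellingerDist_hellingerGeodesic_end ht₀ ht₁ hA hX hS h1.posSemidef hS2 hS3).trans
      (by rw [sub_half]; exact one_div_mul_eq_div _ _)
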